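/- Let λ ∈ ℂ ∖ Γ. Denote by ℒ(f) ∈ ℂ((z)) the Laurent expansion at 0 of a function f meromorphic at 0. Then ℂ((z)) is the internal direct sum of the ℂ-subspace ℂ[[z]] and the ℂ-linear span of { ℒ(e_{i,λ}) : i ∈ ℕ }: every formal Laurent series decomposes uniquely as g + Σ_{i=0}^{N} c_i ℒ(e_{i,λ}) with g ∈ ℂ[[z]] and c_i ∈ ℂ. -/

import Mathlib

/-! Near `0` write `θ(z) = z u(z)` with `u` holomorphic and `u(0) = θ'(0) = 1`; then
`θ(λ + z)/θ(z) = θ(λ)/z + ψ(z)` with `ψ` holomorphic at `0`, and `θ(λ) ≠ 0` since `λ ∉ Γ`.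
Differentiating `i` times gives `e_{i,λ}(z) = c_i z^{-1-i} + ψ^{(i)}(z)` with
`c_i = (-1)^i i! θ(λ) ≠ 0`, so by uniqueness of Laurent expansions
`ℒ(e_{i,λ}) ∈ c_i z^{-1-i} + ℂ[[z]]`. Such a family is triangular with respect to the negative
coefficients, so its span is a complement of `ℂ[[z]]`. -/

open Complex

/-- The lattice `Γ = ℤ + τℤ` associated to `τ`. -/
def lattice (τ : ℂ) : Set ℂ := {z : ℂ | ∃ m n : ℤ, z = (m : ℂ) + (n : ℂ) * τ}

/-- `e_{i,λ}(z) = (d/dz)^i (θ(λ+z)/θ(z))`. -/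
noncomputable def eFun (θ : ℂ → ℂ) (lam : ℂ) (i : ℕ) : ℂ → ℂ :=
  iteratedDeriv i (fun z => θ (lam + z) / θ z)

/-- `F ∈ ℂ((z))` is the Laurent expansion at `0` of `f : ℂ → ℂ`:
the series `Σ F_n z^n` converges to `f z` on a punctured disc around `0`. -/
def IsLaurentExpansionAt (F : LaurentSeries ℂ) (f : ℂ → ℂ) : Prop :=
  ∃ ρ : ℝ, 0 < ρ ∧ ∀ z : ℂ, z ≠ 0 → ‖z‖ < ρ →
    HasSum (fun n : ℤ => F.coeff n * z ^ n) (f z)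

/-- `ℂ[[z]]` viewed as the subspace of `ℂ((z))` of series with no negative
coefficients. -/
noncomputable def powerSeriesSubspace : Submodule ℂ (LaurentSeries ℂ) where
  carrier := {F : LaurentSeries ℂ | ∀ n : ℤ, n < 0 → F.coeff n = 0}
  add_mem' := by
    intro a b ha hb n hn
    simp only [HahnSeries.coeff_add, ha n hn, hb n hn, add_zero]
  zero_mem' := by
    intro n hn
    simp
  smul_mem' := by
    intro c F hF n hn
    simp only [HahnSeries.coeff_smul, hF n hn, smul_zero]

open Filter Topology

theorem isLaurentExpansionAt_iff_eventually {F : LaurentSeries ℂ} {f : ℂ → ℂ} :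
    IsLaurentExpansionAt F f ↔
      ∀ᶠ z in 𝓝[≠] 0, HasSum (fun n : ℤ => F.coeff n * z ^ n) (f z) := by
  simp only [IsLaurentExpansionAt, eventually_nhdsWithin_iff, Metric.eventually_nhds_iff,
    dist_zero_right, Set.mem_compl_singleton_iff]
  exact exists_congr fun ρ => and_congr_right fun _ => forall_congr' fun z => forall_comm

namespace IsLaurentExpansionAt

variable {F G : LaurentSeries ℂ} {f g : ℂ → ℂ}

theorem congr (hF : IsLaurentExpansionAt F f) (hfg : f =ᶠ[𝓝[≠] 0] g) :
    IsLaurentExpansionAt F g := by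
  rw [isLaurentExpansionAt_iff_eventually] at hF ⊢
  filter_upwards [hF, hfg] with z hz hfgz
  rwa [← hfgz]

theorem add (hF : IsLaurentExpansionAt F f) (hG : IsLaurentExpansionAt G g) :
    IsLaurentExpansionAt (F + G) (f + g) := by
  rw [isLaurentExpansionAt_iff_eventually] at hF hG ⊢
  filter_upwards [hF, hG] with z hFz hGz
  simpa only [HahnSeries.coeff_add, add_mul, Pi.add_apply] using hFz.add hGz

theorem sub (hF : IsLaurentExpansionAt F f) (hG : IsLaurentExpansionAt G g) :
    IsLaurentExpansionAt (F - G) (f - g) := by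
  rw [isLaurentExpansionAt_iff_eventually] at hF hG ⊢
  filter_upwards [hF, hG] with z hFz hGz
  simpa only [HahnSeries.coeff_sub, sub_mul, Pi.sub_apply] using hFz.sub hGz

end IsLaurentExpansionAt

theorem isLaurentExpansionAt_single (m : ℤ) (c : ℂ) :
    IsLaurentExpansionAt (HahnSeries.single m c) (fun z => c * z ^ m) := by
  refine ⟨1, one_pos, fun z _ _ => ?_⟩
  convert hasSum_ite_eq m (c * z ^ m) using 2 with n
  rw [HahnSeries.coeff_single]
  split_ifs <;> simp_all

theorem AnalyticAt.exists_isLaurentExpansionAt {g : ℂ → ℂ} (hg : AnalyticAt ℂ g 0) :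
    ∃ G ∈ powerSeriesSubspace, IsLaurentExpansionAt G g := by
  obtain ⟨p, hp⟩ := hg
  have hneg : ∀ n : ℤ, n < 0 →
      (HahnSeries.ofPowerSeries ℤ ℂ (PowerSeries.mk p.coeff)).coeff n = 0 := fun n hn =>
    HahnSeries.embDomain_of_notMem_range (by rintro ⟨k, rfl⟩; simp at hn; omega)
  refine ⟨_, hneg, isLaurentExpansionAt_iff_eventually.2 ?_⟩
  filter_upwards [nhdsWithin_le_nhds hp.eventually_hasSum] with z hz
  rw [← (Nat.cast_injective (R := ℤ)).hasSum_iff]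
  · simpa [Function.comp_def, HahnSeries.ofPowerSeries_apply_coeff, mul_comm] using hz
  · rintro n hn
    rw [hneg n (by contrapose! hn; exact ⟨n.toNat, by simp [hn]⟩), zero_mul]

theorem eq_zero_of_eventually_hasSum_pow_zero {a : ℕ → ℂ}
    (h : ∀ᶠ z in 𝓝[≠] (0 : ℂ), HasSum (fun k => a k * z ^ k) 0) : a = 0 := by
  set p := FormalMultilinearSeries.ofScalars ℂ a
  set S := FormalMultilinearSeries.ofScalarsSum (E := ℂ) a
  obtain ⟨ε, hε, hball⟩ := Metric.eventually_nhds_iff.1 (eventually_nhdsWithin_iff.1 h)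
  let r : NNReal := ⟨ε / 2, (half_pos hε).le⟩
  have hr : 0 < r := half_pos hε
  have hr_coe : (r : ℝ) = ε / 2 := rfl
  have hsum : HasSum (fun k => a k * ((ε / 2 : ℝ) : ℂ) ^ k) 0 :=
    hball (by simp [abs_of_pos hε, hε]) (by simp [hε.ne'])
  have hradius : (r : ENNReal) ≤ p.radius := by
    refine p.le_radius_of_summable_norm ((summable_norm_iff.2 hsum.summable).congr fun k => ?_)
    simp [p, hr_coe, abs_of_pos hε]
  have hp : HasFPowerSeriesAt S p 0 :=
    (p.hasFPowerSeriesOnBall (lt_of_lt_of_le (by simpa using hr) hradius)).hasFPowerSeriesAt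
  have hzero : S =ᶠ[𝓝[≠] 0] 0 := by
    filter_upwards [h] with z hz
    simpa [S, FormalMultilinearSeries.ofScalars_sum_eq, mul_comm] using hz.tsum_eq
  have hnhds := hp.analyticAt.eventually_eq_zero_or_eventually_ne_zero.resolve_right
    fun hne => (Filter.Eventually.and hzero hne).exists.elim fun z hz => hz.2 hz.1
  exact (FormalMultilinearSeries.ofScalars_series_eq_zero ℂ).1 (hp.congr hnhds).eq_zero

theorem IsLaurentExpansionAt.eq_zero {F : LaurentSeries ℂ} (hF : IsLaurentExpansionAt F 0) :
    F = 0 := by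
  by_contra hF0
  suffices (fun k : ℕ => F.coeff (F.order + k)) = 0 from
    hF0 (HahnSeries.coeff_order_eq_zero.1 (by simpa using congr_fun this 0))
  refine eq_zero_of_eventually_hasSum_pow_zero ?_
  filter_upwards [isLaurentExpansionAt_iff_eventually.1 hF, self_mem_nhdsWithin] with z hz hz0
  have hinj : Function.Injective fun k : ℕ => F.order + k := fun k l hkl => by simpa using hkl
  have hshift : HasSum (fun k : ℕ => F.coeff (F.order + k) * z ^ (F.order + k)) 0 := by
    refine (hinj.hasSum_iff (f := fun n : ℤ => F.coeff n * z ^ n) fun n hn => ?_).2 hz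
    rw [HahnSeries.coeff_eq_zero_of_lt_order, zero_mul]
    contrapose! hn
    exact ⟨(n - F.order).toNat, show F.order + ((n - F.order).toNat : ℤ) = n by omega⟩
  simpa using (hshift.mul_left (z ^ F.order)⁻¹).congr_fun fun k => by
    have hzD : z ^ F.order ≠ 0 := zpow_ne_zero _ hz0
    rw [zpow_add₀ hz0, zpow_natCast]
    field_simp

theorem IsLaurentExpansionAt.unique {F G : LaurentSeries ℂ} {f : ℂ → ℂ}
    (hF : IsLaurentExpansionAt F f) (hG : IsLaurentExpansionAt G f) : F = G := by
  have hFG := hF.sub hG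
  rw [sub_self] at hFG
  exact sub_eq_zero.1 hFG.eq_zero

theorem AnalyticAt.dslope {𝕜 E : Type*} [NontriviallyNormedField 𝕜] [NormedAddCommGroup E]
    [NormedSpace 𝕜 E] {f : 𝕜 → E} {a : 𝕜} (hf : AnalyticAt 𝕜 f a) :
    AnalyticAt 𝕜 (dslope f a) a :=
  let ⟨_, hp⟩ := hf
  ⟨_, hp.has_fpower_series_dslope_fslope⟩

theorem exists_analyticAt_div_eq_mul_inv_add {𝕜 : Type*} [NontriviallyNormedField 𝕜]
    [CompleteSpace 𝕜] {N θ : 𝕜 → 𝕜} (hN : AnalyticAt 𝕜 N 0) (hθ : AnalyticAt 𝕜 θ 0)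
    (hθ0 : θ 0 = 0) (hθ' : deriv θ 0 = 1) :
    ∃ ψ : 𝕜 → 𝕜, AnalyticAt 𝕜 ψ 0 ∧ ∀ z ≠ 0, N z / θ z = N 0 * z⁻¹ + ψ z := by
  have hslope0 : dslope θ 0 0 = 1 := by rw [← hθ']; exact dslope_same θ 0
  set φ := fun z => N z / dslope θ 0 z
  have hφ0 : φ 0 = N 0 := by simp only [φ, hslope0, div_one]
  refine ⟨dslope φ 0, (hN.div hθ.dslope (by rw [hslope0]; exact one_ne_zero)).dslope,
    fun z hz => ?_⟩
  have hθz : θ z = z * dslope θ 0 z := by simpa [hθ0] using (sub_smul_dslope θ 0 z).symm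
  have hφz : φ z - φ 0 = z * dslope φ 0 z := by simpa using (sub_smul_dslope φ 0 z).symm
  calc N z / θ z = φ z / z := by rw [hθz, div_mul_eq_div_div_swap]
    _ = N 0 * z⁻¹ + dslope φ 0 z := by
      rw [← hφ0, ← mul_div_cancel_left₀ (dslope φ 0 z) hz, ← hφz]
      ring

theorem iteratedDeriv_eventuallyEq_zpow_add {𝕜 : Type*} [NontriviallyNormedField 𝕜]
    [CompleteSpace 𝕜] {f ψ : 𝕜 → 𝕜} {c : 𝕜} (hψ : AnalyticAt 𝕜 ψ 0)
    (hf : f =ᶠ[𝓝[≠] 0] fun z => c * z⁻¹ + ψ z) (i : ℕ) :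
    iteratedDeriv i f =ᶠ[𝓝[≠] 0] fun z =>
      c * (∏ j ∈ Finset.range i, (-1 - (j : 𝕜))) * z ^ (-1 - (i : ℤ)) + iteratedDeriv i ψ z := by
  have hψnear : ∀ᶠ z in 𝓝[≠] 0, AnalyticAt 𝕜 ψ z :=
    nhdsWithin_le_nhds hψ.eventually_analyticAt
  filter_upwards [eventually_eventually_nhdsWithin.2 hf, hψnear, self_mem_nhdsWithin]
    with z hfz hψz hz
  have hz : z ≠ 0 := hz
  rw [isOpen_compl_singleton.nhdsWithin_eq hz] at hfz
  have hpole : ContDiffAt 𝕜 i (fun w => c * w⁻¹) z := by fun_prop (disch := assumption)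
  rw [Filter.EventuallyEq.iteratedDeriv_eq i (g := fun w => c * w⁻¹ + ψ w) hfz,
    iteratedDeriv_fun_add hpole hψz.contDiffAt, iteratedDeriv_const_mul_field,
    show (Inv.inv : 𝕜 → 𝕜) = fun w => w ^ (-1 : ℤ) from funext fun w => (zpow_neg_one w).symm,
    iteratedDeriv_eq_iterate, iter_deriv_zpow]
  push_cast
  ring

theorem coeff_eq_of_sub_mem_powerSeriesSubspace {F G : LaurentSeries ℂ}
    (h : F - G ∈ powerSeriesSubspace) {n : ℤ} (hn : n < 0) : F.coeff n = G.coeff n :=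
  sub_eq_zero.1 (by simpa using h n hn)

theorem coeff_eq_of_sub_single_mem_powerSeriesSubspace {G : LaurentSeries ℂ} {m : ℤ} {a : ℂ}
    (h : G - HahnSeries.single m a ∈ powerSeriesSubspace) (hm : m < 0) : G.coeff m = a := by
  rw [coeff_eq_of_sub_mem_powerSeriesSubspace h hm, HahnSeries.coeff_single_same]

theorem coeff_eq_zero_of_sub_single_mem_powerSeriesSubspace {G : LaurentSeries ℂ} {m n : ℤ}
    {a : ℂ} (h : G - HahnSeries.single m a ∈ powerSeriesSubspace) (hm : m < 0) (hn : n < m) :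
    G.coeff n = 0 := by
  rw [coeff_eq_of_sub_mem_powerSeriesSubspace h (hn.trans hm), HahnSeries.coeff_single,
    if_neg hn.ne]

section

variable {F : ℕ → LaurentSeries ℂ} {c : ℕ → ℂ}

theorem disjoint_powerSeriesSubspace_span (hc : ∀ i, c i ≠ 0)
    (hF : ∀ i, F i - HahnSeries.single (-1 - (i : ℤ)) (c i) ∈ powerSeriesSubspace) :
    Disjoint powerSeriesSubspace (Submodule.span ℂ (Set.range F)) := by
  rw [Submodule.disjoint_def]
  intro x hxP hxS
  obtain ⟨l, rfl⟩ := Finsupp.mem_span_range_iff_exists_finsupp.1 hxS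
  suffices l = 0 by simp [this]
  by_contra hl
  set i := l.support.max' (Finsupp.support_nonempty_iff.2 hl)
  have hi : i ∈ l.support := Finset.max'_mem _ _
  have hcoeff : (l.sum fun j a => a • F j).coeff (-1 - i) = l i * c i := by
    rw [Finsupp.sum, HahnSeries.coeff_sum, Finset.sum_eq_single_of_mem i hi fun j hj hji => ?_,
      HahnSeries.coeff_smul, coeff_eq_of_sub_single_mem_powerSeriesSubspace (hF i) (by omega),
      smul_eq_mul]
    have hji : j < i := lt_of_le_of_ne (Finset.le_max' _ j hj) hji
    rw [HahnSeries.coeff_smul,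
      coeff_eq_zero_of_sub_single_mem_powerSeriesSubspace (hF j) (by omega) (by omega), smul_zero]
  have := hxP (-1 - i) (by omega)
  rw [hcoeff] at this
  exact Finsupp.mem_support_iff.1 hi ((mul_eq_zero.1 this).resolve_right (hc i))

theorem codisjoint_powerSeriesSubspace_span (hc : ∀ i, c i ≠ 0)
    (hF : ∀ i, F i - HahnSeries.single (-1 - (i : ℤ)) (c i) ∈ powerSeriesSubspace) :
    Codisjoint powerSeriesSubspace (Submodule.span ℂ (Set.range F)) := by
  rw [codisjoint_iff, eq_top_iff]
  rintro G -
  suffices ∀ k : ℕ, ∀ G : LaurentSeries ℂ, (∀ n < -(k : ℤ), G.coeff n = 0) →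
      G ∈ powerSeriesSubspace ⊔ Submodule.span ℂ (Set.range F) from
    this (-G.order).toNat G fun n hn => HahnSeries.coeff_eq_zero_of_lt_order (by omega)
  intro k
  induction k with
  | zero => exact fun G hG => Submodule.mem_sup_left fun n hn => hG n (by simpa using hn)
  | succ k ih =>
    intro G hG
    set a := G.coeff (-1 - k) / c k
    have hrest : G - a • F k ∈ powerSeriesSubspace ⊔ Submodule.span ℂ (Set.range F) := by
      refine ih _ fun n hn => ?_
      rw [HahnSeries.coeff_sub, HahnSeries.coeff_smul, smul_eq_mul, sub_eq_zero]
      rcases (show n ≤ -1 - k by omega).lt_or_eq with hlt | rfl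
      · rw [hG n (by omega),
          coeff_eq_zero_of_sub_single_mem_powerSeriesSubspace (hF k) (by omega) hlt, mul_zero]
      · rw [coeff_eq_of_sub_single_mem_powerSeriesSubspace (hF k) (by omega),
          div_mul_cancel₀ _ (hc k)]
    simpa using add_mem hrest
      (Submodule.mem_sup_right (Submodule.smul_mem _ a (Submodule.subset_span ⟨k, rfl⟩)))

theorem isCompl_powerSeriesSubspace_span (hc : ∀ i, c i ≠ 0)
    (hF : ∀ i, F i - HahnSeries.single (-1 - (i : ℤ)) (c i) ∈ powerSeriesSubspace) :
    IsCompl powerSeriesSubspace (Submodule.span ℂ (Set.range F)) :=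
  ⟨disjoint_powerSeriesSubspace_span hc hF, codisjoint_powerSeriesSubspace_span hc hF⟩

end

theorem laurent_decomposition_eFun_general (τ : ℂ) (θ : ℂ → ℂ)
    (hθ_entire : Differentiable ℂ θ)
    (hθ_deriv : deriv θ 0 = 1)
    (hθ_zero : ∀ z : ℂ, θ z = 0 ↔ z ∈ lattice τ)
    (lam : ℂ) (hlam : lam ∉ lattice τ)
    (F : ℕ → LaurentSeries ℂ)
    (hF : ∀ i : ℕ, IsLaurentExpansionAt (F i) (eFun θ lam i)) :
    IsCompl powerSeriesSubspace (Submodule.span ℂ (Set.range F)) := by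
  have hθ0 : θ 0 = 0 := (hθ_zero 0).2 ⟨0, 0, by simp⟩
  have hθlam : θ lam ≠ 0 := fun h => hlam ((hθ_zero lam).1 h)
  obtain ⟨ψ, hψ, hquot⟩ := exists_analyticAt_div_eq_mul_inv_add
    ((hθ_entire.comp (differentiable_id.const_add lam)).analyticAt 0) (hθ_entire.analyticAt 0)
    hθ0 hθ_deriv
  simp only [Function.comp_apply, id, add_zero] at hquot
  set C : ℕ → ℂ := fun i => θ lam * ∏ j ∈ Finset.range i, (-1 - (j : ℂ))
  have hC : ∀ i, C i ≠ 0 := fun i => mul_ne_zero hθlam <| Finset.prod_ne_zero_iff.2 fun j _ => by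
    exact_mod_cast (by omega : -1 - (j : ℤ) ≠ 0)
  refine isCompl_powerSeriesSubspace_span hC fun i => ?_
  have hpole := iteratedDeriv_eventuallyEq_zpow_add hψ (eventually_nhdsWithin_of_forall hquot) i
  obtain ⟨G, hGP, hG⟩ := (hψ.iterated_deriv i).exists_isLaurentExpansionAt
  rw [← iteratedDeriv_eq_iterate] at hG
  rw [(hF i).unique (((isLaurentExpansionAt_single _ (C i)).add hG).congr hpole.symm)]
  simpa using hGP

/-- **`ℂ((z)) = ℂ[[z]] ⊕ span{ℒ(e_{i,λ})}` for `λ ∉ Γ`.**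
If `F i` is the Laurent expansion at `0` of `e_{i,λ}` for every `i`, then `ℂ((z))`
is the internal direct sum of `ℂ[[z]]` and the span of the `F i`. -/
theorem laurent_decomposition_eFun (τ : ℂ) (hτ : 0 < τ.im) (θ : ℂ → ℂ)
    (hθ_entire : Differentiable ℂ θ)
    (hθ_deriv : deriv θ 0 = 1)
    (hθ_zero : ∀ z : ℂ, θ z = 0 ↔ z ∈ lattice τ)
    (hθ_per1 : ∀ z : ℂ, θ (z + 1) = - θ z)
    (hθ_perτ : ∀ z : ℂ, θ (z + τ) =
      - Complex.exp (-(Real.pi : ℂ) * Complex.I * τ) *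
        Complex.exp (-2 * (Real.pi : ℂ) * Complex.I * z) * θ z)
    (lam : ℂ) (hlam : lam ∉ lattice τ)
    (F : ℕ → LaurentSeries ℂ)
    (hF : ∀ i : ℕ, IsLaurentExpansionAt (F i) (eFun θ lam i)) :
    IsCompl powerSeriesSubspace (Submodule.span ℂ (Set.range F)) :=
  laurent_decomposition_eFun_general τ θ hθ_entire hθ_deriv hθ_zero lam hlam F hF
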